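/- Consider the action of the 24-element quaternion group image O_D^× ⊂ GL_2(F_5) on the Serre weights σ_{m,n} = Sym^m(F_5^2) ⊗ det^n for 0 ≤ m ≤ 4, 0 ≤ n ≤ 3. The space of O_D^×-invariants (σ_{m,n})^{O_D^×} is nonzero if and only if m = 0. -/

import Mathlib

/-! The group `O_D^×` consists of matrices of determinant one and moves `(1, 0)` to every nonzero
vector of `F₅²`, so an invariant form `f` of degree `m` takes one value `c` on the 24 nonzero
vectors and, if `m > 0`, vanishes at `0`. Since `m < 2 · (5 - 1)`, the sum of `f` over `F₅²` is
zero (the power-sum lemma behind Chevalley–Warning), and that sum is `24 c = -c`. So `f` vanishes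
on `F₅²`, and as its degree in each variable is below `5`, `f = 0`. -/

open Matrix MvPolynomial

/-- The image in `GL₂(F₅)` of the 24-element Hurwitz quaternion unit group `O_D^×`
(listed explicitly as matrices over `F₅`). -/
def ODunits : Set (Matrix (Fin 2) (Fin 2) (ZMod 5)) :=
  {1, -1, !![0,1;4,0], -!![0,1;4,0], !![2,0;0,3], -!![2,0;0,3], !![0,3;3,0], -!![0,3;3,0],
   !![4,2;1,2], -!![4,2;1,2], !![3,2;1,1], -!![3,2;1,1], !![4,1;2,2], -!![4,1;2,2],
   !![2,2;1,4], -!![2,2;1,4], !![4,4;3,2], -!![4,4;3,2], !![3,1;2,1], -!![3,1;2,1],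
   !![1,2;1,3], -!![1,2;1,3], !![3,4;3,1], -!![3,4;3,1]}

/-- The action of `g ∈ GL₂(F₅)` on polynomials in two variables defining the Serre weight
`σ_{m,n} = Sym^m(F₅²) ⊗ det^n`: substitution by `g` twisted by `det(g)^n`. -/
noncomputable def serreAct (n : ℕ) (g : Matrix (Fin 2) (Fin 2) (ZMod 5))
    (f : MvPolynomial (Fin 2) (ZMod 5)) : MvPolynomial (Fin 2) (ZMod 5) :=
  (g.det) ^ n • MvPolynomial.bind₁
    (fun i => ∑ j : Fin 2, MvPolynomial.C (g i j) * MvPolynomial.X j) f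

universe u

namespace MvPolynomial.IsHomogeneous

section

variable {R σ : Type*} [CommSemiring R] {f : MvPolynomial σ R} {m : ℕ}

theorem mem_restrictDegree (hf : f.IsHomogeneous m) {n : ℕ} (hmn : m ≤ n) :
    f ∈ restrictDegree σ R n := by
  rw [MvPolynomial.mem_restrictDegree]
  intro s hs i
  have hdeg : s.degree = m := by
    rw [Finsupp.degree_eq_weight_one]
    exact hf (mem_support_iff.mp hs)
  have := Finsupp.le_degree i s
  omega

theorem eval_zero_eq_zero (hf : f.IsHomogeneous m) (hm : m ≠ 0) : eval 0 f = 0 := by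
  rw [eval_zero, constantCoeff_eq]
  exact hf.coeff_eq_zero (by simpa using hm.symm)

end

-- `MvPolynomial.eq_zero_of_eval_eq_zero` puts `σ` and `K` in one universe.
open Finset in
theorem eq_zero_of_eval_eq_of_ne_zero {K σ : Type u} [Field K] [Fintype K] [Fintype σ]
    {f : MvPolynomial σ K} {m : ℕ} (hf : f.IsHomogeneous m) (hm : m ≠ 0)
    (hmK : m < Fintype.card K) (hmσ : m < (Fintype.card K - 1) * Fintype.card σ) {c : K}
    (hc : ∀ v ≠ 0, eval v f = c) : f = 0 := by
  classical
  have h0 := hf.eval_zero_eq_zero hm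
  have hσ : Fintype.card σ ≠ 0 := by rintro h; simp [h] at hmσ
  have hsum : ∑ v, eval v f = -c := by
    calc ∑ v, eval v f = ∑ v : σ → K, (c - if v = 0 then c else 0) :=
          sum_congr rfl fun v _ => by
            split_ifs with hv
            · rw [hv, h0, sub_self]
            · rw [hc v hv, sub_zero]
      _ = -c := by simp [sum_sub_distrib, hσ] -- `|K ^ σ| = |K| ^ |σ|` vanishes in `K`
  have hc0 : c = 0 := by
    simpa [hsum] using sum_eval_eq_zero f (hf.totalDegree_le.trans_lt hmσ)
  refine eq_zero_of_eval_eq_zero σ K f (fun v => ?_)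
    (hf.mem_restrictDegree (Nat.le_sub_one_of_lt hmK))
  by_cases hv : v = 0
  · rwa [hv]
  · rw [hc v hv, hc0]

end MvPolynomial.IsHomogeneous

theorem eval_serreAct (n : ℕ) (g : Matrix (Fin 2) (Fin 2) (ZMod 5))
    (f : MvPolynomial (Fin 2) (ZMod 5)) (v : Fin 2 → ZMod 5) :
    eval v (serreAct n g f) = g.det ^ n * eval (g *ᵥ v) f := by
  have hsubst : (fun i => aeval v (∑ j, C (g i j) * X j)) = g *ᵥ v := by
    funext i
    simp [mulVec, dotProduct]
  rw [serreAct, smul_eval]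
  change _ * aeval v _ = _
  rw [aeval_bind₁, hsubst]
  rfl

theorem det_eq_one_of_mem_ODunits : ∀ u ∈ ODunits, u.det = 1 := by
  simp only [ODunits, Set.forall_mem_insert, Set.mem_singleton_iff, forall_eq]
  and_intros <;> decide

theorem exists_mem_ODunits_mulVec_eq {w : Fin 2 → ZMod 5} (hw : w ≠ 0) :
    ∃ u ∈ ODunits, u *ᵥ ![1, 0] = w := by
  simp only [ODunits, Set.mem_insert_iff, Set.mem_singleton_iff, exists_eq_or_imp, exists_eq_left]
  revert w
  decide

theorem serre_weight_invariants_nonzero_iff_general (m n : ℕ) (hm : m ≤ 4) :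
    (∃ f : MvPolynomial (Fin 2) (ZMod 5), f ≠ 0 ∧ f.IsHomogeneous m ∧
      ∀ u ∈ ODunits, serreAct n u f = f) ↔ m = 0 := by
  have : Fact (Nat.Prime 5) := ⟨Nat.prime_five⟩
  constructor
  · rintro ⟨f, hf0, hf, hinv⟩
    by_contra hm0
    have hconst : ∀ v ≠ 0, eval v f = eval ![1, 0] f := fun v hv => by
      obtain ⟨u, hu, rfl⟩ := exists_mem_ODunits_mulVec_eq hv
      have := eval_serreAct n u f ![1, 0]
      rwa [hinv u hu, det_eq_one_of_mem_ODunits u hu, one_pow, one_mul, eq_comm] at this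
    exact hf0 (hf.eq_zero_of_eval_eq_of_ne_zero hm0 (by simp; omega) (by simp; omega) hconst)
  · rintro rfl
    refine ⟨1, one_ne_zero, isHomogeneous_one _ _, fun u hu => ?_⟩
    rw [serreAct, map_one, det_eq_one_of_mem_ODunits u hu, one_pow, one_smul]

/-- For the Serre weights `σ_{m,n} = Sym^m(F₅²) ⊗ det^n` with `0 ≤ m ≤ 4`, `0 ≤ n ≤ 3`, the
space of invariants `(σ_{m,n})^{O_D^×}` under the 24-element quaternion group
`O_D^× ⊂ GL₂(F₅)` is nonzero if and only if `m = 0`. -/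
theorem serre_weight_invariants_nonzero_iff (m n : ℕ) (hm : m ≤ 4) (hn : n ≤ 3) :
    (∃ f : MvPolynomial (Fin 2) (ZMod 5), f ≠ 0 ∧ f.IsHomogeneous m ∧
      ∀ u ∈ ODunits, serreAct n u f = f) ↔ m = 0 :=
  serre_weight_invariants_nonzero_iff_general m n hm
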